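/- Let K be a field and q ∈ K an element that is not a root of unity. In the quantum plane B = B(q), let J = B(a−1) and W = B/J, and for n ≥ 0 let w_n = bⁿ + J and W_n = B·w_n. Then W = W_0 ⊋ W_1 ⊋ W_2 ⊋ ⋯ is a strictly descending chain, and every nonzero B-submodule of W equals W_n for some n ≥ 0; in particular the submodules of W are linearly ordered by inclusion. -/

import Mathlib

noncomputable section

open FreeAlgebra

/-- Defining relation of the quantum plane `B(q)`: `a * b = q • (b * a)`, where
`ι K 0` plays the role of `a` and `ι K 1` plays the role of `b`. -/
inductive QuantumPlaneRel (K : Type) [Field K] (q : K) :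
    FreeAlgebra K (Fin 2) → FreeAlgebra K (Fin 2) → Prop
  | rel : QuantumPlaneRel K q (ι K (0 : Fin 2) * ι K (1 : Fin 2))
      (q • (ι K (1 : Fin 2) * ι K (0 : Fin 2)))

/-- The coordinate algebra of the quantum plane `B(q)`. -/
abbrev QuantumPlane (K : Type) [Field K] (q : K) : Type :=
  RingQuot (QuantumPlaneRel K q)

/-- The generator `a` of the quantum plane. -/
def QuantumPlane.a (K : Type) [Field K] (q : K) : QuantumPlane K q :=
  RingQuot.mkAlgHom K (QuantumPlaneRel K q) (ι K (0 : Fin 2))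

/-- The generator `b` of the quantum plane. -/
def QuantumPlane.b (K : Type) [Field K] (q : K) : QuantumPlane K q :=
  RingQuot.mkAlgHom K (QuantumPlaneRel K q) (ι K (1 : Fin 2))

/-! The classes `w n = [bⁿ]` form a `K`-basis of `W = B/J` on which `b` acts as the shift
`w n ↦ w (n+1)` and `a` diagonally, `a • w n = qⁿ • w n` (because `a ≡ 1` modulo `J`). They
span because they span a `B`-stable subspace containing `w 0`; they are independent because the
representation of `B(q)` on `K[X]` by `f(X) ↦ f(qX)` and multiplication by `X` sends `w n` to
`Xⁿ`. As `q` is not a root of unity, the eigenvalues `qⁿ` are distinct, so by Lagrange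
interpolation in `a` a submodule containing `v` contains every `w m` with `m` in the support of
`v`. Hence `B·w n` is the span of the `w k` with `k ≥ n`, and a nonzero submodule is `B·w n` for
the least `n` with `w n` in it. -/

open Polynomial Submodule

theorem pow_injective_of_pow_ne_one {G₀ : Type*} [GroupWithZero G₀] {q : G₀} (hq0 : q ≠ 0)
    (hq : ∀ k : ℕ, 0 < k → q ^ k ≠ 1) : Function.Injective (q ^ · : ℕ → G₀) := by
  lift q to G₀ˣ using isUnit_iff_ne_zero.mpr hq0
  have horder : orderOf q = 0 :=
    orderOf_eq_zero_iff'.mpr fun k hk h => hq k hk (by simpa using congr_arg Units.val h)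
  intro m n h
  exact (pow_inj_iff_of_orderOf_eq_zero horder).mp (Units.ext (by simpa using h))

theorem Polynomial.aeval_smul_of_smul_eq {R A M : Type*} [CommRing R] [Ring A] [Algebra R A]
    [AddCommGroup M] [Module A M] [Module R M] [IsScalarTower R A M] {α : A} {μ : R} {m : M}
    (h : α • m = μ • m) (p : R[X]) : aeval α p • m = p.eval μ • m := by
  rcases eq_or_ne m 0 with rfl | hm0
  · simp
  have hm : (Algebra.lsmul R R M α).HasEigenvector μ m :=
    Module.End.hasEigenvector_iff.mpr ⟨Module.End.mem_eigenspace_iff.mpr h, hm0⟩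
  have := Module.End.aeval_apply_of_hasEigenvector (p := p) hm
  rwa [aeval_algHom_apply, Algebra.lsmul_coe] at this

/-- A Lagrange polynomial in `α` isolates the coordinate `i`. -/
theorem Module.Basis.mem_of_repr_ne_zero {ι R A M : Type*} [Field R] [Ring A] [Algebra R A]
    [AddCommGroup M] [Module A M] [Module R M] [IsScalarTower R A M] (v : Module.Basis ι R M)
    {α : A} {μ : ι → R} (hμ : Function.Injective μ) (hα : ∀ i, α • v i = μ i • v i)
    {N : Submodule A M} {x : M} (hx : x ∈ N) {i : ι} (hi : v.repr x i ≠ 0) : v i ∈ N := by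
  classical
  set p : R[X] := ∏ j ∈ (v.repr x).support.erase i, (X - C (μ j))
  have hp : aeval α p • x = (p.eval (μ i) * v.repr x i) • v i := by
    conv_lhs => rw [← v.linearCombination_repr x, Finsupp.linearCombination_apply, Finsupp.sum,
      Finset.smul_sum]
    rw [Finset.sum_eq_single i]
    · rw [smul_algebra_smul_comm, aeval_smul_of_smul_eq (hα i), smul_smul, mul_comm]
    · intro j hj hji
      rw [smul_algebra_smul_comm, aeval_smul_of_smul_eq (hα j), eval_prod,
        Finset.prod_eq_zero (Finset.mem_erase.mpr ⟨hji, hj⟩) (by simp), zero_smul, smul_zero]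
    · intro hi'
      exact absurd (Finsupp.notMem_support_iff.mp hi') hi
  have hpi : p.eval (μ i) ≠ 0 := by
    rw [eval_prod, Finset.prod_ne_zero_iff]
    intro j hj
    rw [eval_sub, eval_X, eval_C, sub_ne_zero]
    exact hμ.ne (Finset.mem_erase.mp hj).1.symm
  have := N.smul_of_tower_mem (p.eval (μ i) * v.repr x i)⁻¹ (N.smul_mem (aeval α p) hx)
  rwa [hp, smul_smul, inv_mul_cancel₀ (mul_ne_zero hpi hi), one_smul] at this

namespace QuantumPlane

section Algebra

variable {K : Type} [Field K] {q : K}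

theorem a_mul_b : a K q * b K q = q • (b K q * a K q) := by
  have := RingQuot.mkAlgHom_rel K (QuantumPlaneRel.rel (K := K) (q := q))
  rwa [map_mul, map_smul, map_mul] at this

theorem a_mul_b_pow (n : ℕ) : a K q * b K q ^ n = q ^ n • (b K q ^ n * a K q) := by
  induction n with
  | zero => simp
  | succ n ih =>
    calc a K q * b K q ^ (n + 1) = (a K q * b K q) * b K q ^ n := by rw [pow_succ', mul_assoc]
      _ = q • (b K q * (a K q * b K q ^ n)) := by rw [a_mul_b, smul_mul_assoc, mul_assoc]
      _ = q ^ (n + 1) • (b K q ^ (n + 1) * a K q) := by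
        rw [ih, mul_smul_comm, smul_smul, ← mul_assoc, ← pow_succ', ← pow_succ']

@[elab_as_elim]
theorem induction_on {motive : QuantumPlane K q → Prop} (x : QuantumPlane K q)
    (of_algebraMap : ∀ r, motive (algebraMap K _ r)) (of_a : motive (a K q))
    (of_b : motive (b K q)) (add : ∀ x y, motive x → motive y → motive (x + y))
    (mul : ∀ x y, motive x → motive y → motive (x * y)) : motive x := by
  obtain ⟨x, rfl⟩ := RingQuot.mkAlgHom_surjective K _ x
  induction x using FreeAlgebra.induction with
  | grade0 r => simpa using of_algebraMap r
  | grade1 i => fin_cases i; exacts [of_a, of_b]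
  | mul x y hx hy => simpa using mul _ _ hx hy
  | add x y hx hy => simpa using add _ _ hx hy

theorem restrictScalars_span_eq {M : Type*} [AddCommGroup M] [Module (QuantumPlane K q) M]
    [Module K M] [IsScalarTower K (QuantumPlane K q) M] {s : Set M}
    (ha : ∀ v ∈ s, a K q • v ∈ span K s) (hb : ∀ v ∈ s, b K q • v ∈ span K s) :
    (span (QuantumPlane K q) s).restrictScalars K = span K s := by
  have of_mem : ∀ x : QuantumPlane K q, (∀ v ∈ s, x • v ∈ span K s) →
      ∀ v ∈ span K s, x • v ∈ span K s := fun x hx _ hv =>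
    span_le (p := (span K s).comap (Algebra.lsmul K K M x)).mpr hx hv
  have stable (x : QuantumPlane K q) : ∀ v ∈ span K s, x • v ∈ span K s := by
    induction x using induction_on with
    | of_algebraMap r => exact fun v hv => by rw [algebraMap_smul]; exact smul_mem _ r hv
    | of_a => exact of_mem _ ha
    | of_b => exact of_mem _ hb
    | add x y hx hy => exact fun v hv => by rw [add_smul]; exact add_mem (hx v hv) (hy v hv)
    | mul x y hx hy => exact fun v hv => by rw [mul_smul]; exact hx _ (hy v hv)
  let V : Submodule (QuantumPlane K q) M := { span K s with smul_mem' := stable }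
  exact le_antisymm (fun v hv => (span_le (p := V)).mpr subset_span hv)
    (span_le_restrictScalars K _ s)

end Algebra

def J (K : Type) [Field K] (q : K) : Ideal (QuantumPlane K q) := Ideal.span {a K q - 1}

abbrev W (K : Type) [Field K] (q : K) : Type := QuantumPlane K q ⧸ J K q

def w (K : Type) [Field K] (q : K) (n : ℕ) : W K q := Submodule.Quotient.mk (b K q ^ n)

def polyRep (K : Type) [Field K] (q : K) : QuantumPlane K q →ₐ[K] Module.End K K[X] :=
  RingQuot.liftAlgHom K
    ⟨FreeAlgebra.lift K ![(aeval (C q * X)).toLinearMap, LinearMap.mulLeft K X], by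
      rintro _ _ ⟨⟩
      refine LinearMap.ext fun f => ?_
      simp only [map_mul, lift_ι_apply, Matrix.cons_val_zero, Matrix.cons_val_one,
        Module.End.mul_apply, LinearMap.mulLeft_apply, AlgHom.toLinearMap_apply, aeval_X, map_smul,
        LinearMap.smul_apply, smul_eq_C_mul]
      ring⟩

section Module

variable {K : Type} [Field K] {q : K}

theorem polyRep_a : polyRep K q (a K q) = (aeval (C q * X)).toLinearMap := by
  simp [polyRep, QuantumPlane.a, RingQuot.liftAlgHom_mkAlgHom_apply]

theorem polyRep_b : polyRep K q (b K q) = LinearMap.mulLeft K X := by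
  simp [polyRep, QuantumPlane.b, RingQuot.liftAlgHom_mkAlgHom_apply]

theorem mk_eq_smul_w_zero (x : QuantumPlane K q) :
    (Submodule.Quotient.mk x : W K q) = x • w K q 0 := by
  rw [w, pow_zero, ← Submodule.Quotient.mk_smul, smul_eq_mul, mul_one]

theorem span_w_zero : span (QuantumPlane K q) {w K q 0} = ⊤ := by
  refine eq_top_iff.mpr fun v _ => ?_
  induction v using Submodule.Quotient.induction_on with
  | _ x => rw [mk_eq_smul_w_zero]; exact smul_mem _ _ (mem_span_singleton_self _)

theorem b_pow_smul_w (k n : ℕ) : b K q ^ k • w K q n = w K q (n + k) := by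
  rw [w, w, ← Submodule.Quotient.mk_smul, smul_eq_mul, ← pow_add, add_comm]

/-- `a ≡ 1` modulo `J`, so commuting `a` past `bⁿ` leaves the eigenvalue `qⁿ`. -/
theorem a_smul_w (n : ℕ) : a K q • w K q n = q ^ n • w K q n := by
  have hJ : b K q ^ n * a K q - b K q ^ n ∈ J K q := by
    rw [← mul_sub_one]
    exact smul_mem _ _ (subset_span rfl)
  rw [w, ← Submodule.Quotient.mk_smul, smul_eq_mul, a_mul_b_pow, Submodule.Quotient.mk_smul,
    (Submodule.Quotient.eq _).mpr hJ]

theorem restrictScalars_span_w (n : ℕ) :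
    (span (QuantumPlane K q) {w K q n}).restrictScalars K = span K (w K q '' Set.Ici n) := by
  have hspan :
      span (QuantumPlane K q) {w K q n} = span (QuantumPlane K q) (w K q '' Set.Ici n) := by
    refine le_antisymm (span_mono (Set.singleton_subset_iff.mpr ⟨n, Set.self_mem_Ici, rfl⟩))
      (span_le.mpr ?_)
    rintro _ ⟨k, hk, rfl⟩
    rw [SetLike.mem_coe, ← Nat.add_sub_of_le hk, ← b_pow_smul_w]
    exact smul_mem _ _ (mem_span_singleton_self _)
  rw [hspan]
  refine restrictScalars_span_eq ?_ ?_
  · rintro _ ⟨k, hk, rfl⟩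
    rw [a_smul_w]
    exact smul_mem _ _ (subset_span ⟨k, hk, rfl⟩)
  · rintro _ ⟨k, hk, rfl⟩
    rw [← pow_one (b K q), b_pow_smul_w]
    exact subset_span ⟨k + 1, Set.mem_Ici.mpr (hk.trans k.le_succ), rfl⟩

theorem span_range_w : span K (Set.range (w K q)) = ⊤ := by
  have := restrictScalars_span_w (K := K) (q := q) 0
  rw [span_w_zero, restrictScalars_top, ← Nat.bot_eq_zero, Set.Ici_bot, Set.image_univ] at this
  exact this.symm

/-- `[x] ↦ polyRep x 1`. -/
def toPoly (K : Type) [Field K] (q : K) : W K q →ₗ[K] K[X] :=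
  ((J K q).restrictScalars K).liftQ (LinearMap.applyₗ 1 ∘ₗ (polyRep K q).toLinearMap) (by
      intro x hx
      obtain ⟨c, rfl⟩ := mem_span_singleton.mp hx
      simp [polyRep_a]) ∘ₗ
    (Submodule.Quotient.restrictScalarsEquiv K (J K q)).symm.toLinearMap

theorem toPoly_w (n : ℕ) : toPoly K q (w K q n) = X ^ n := by
  simp [toPoly, w, polyRep_b, LinearMap.pow_mulLeft]

theorem linearIndependent_w : LinearIndependent K (w K q) := by
  refine LinearIndependent.of_comp (toPoly K q) ?_
  have : toPoly K q ∘ w K q = basisMonomials K := by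
    ext1 n
    simp [toPoly_w, X_pow_eq_monomial]
  rw [this]
  exact (basisMonomials K).linearIndependent

def wBasis (K : Type) [Field K] (q : K) : Module.Basis ℕ K (W K q) :=
  .mk linearIndependent_w span_range_w.ge

theorem coe_wBasis : ⇑(wBasis K q) = w K q := Module.Basis.coe_mk _ _

theorem mem_span_w_iff {n : ℕ} {v : W K q} :
    v ∈ span (QuantumPlane K q) {w K q n} ↔ ∀ k ∈ ((wBasis K q).repr v).support, n ≤ k := by
  rw [← restrictScalars_mem K, restrictScalars_span_w, ← coe_wBasis,
    Module.Basis.mem_span_image]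
  rfl

theorem span_w_strictAnti : StrictAnti fun n => span (QuantumPlane K q) {w K q n} := by
  refine strictAnti_nat_of_succ_lt fun n => SetLike.lt_iff_le_and_exists.mpr ⟨?_, ?_⟩
  · rw [span_singleton_le_iff_mem, ← b_pow_smul_w 1]
    exact smul_mem _ _ (mem_span_singleton_self _)
  · refine ⟨w K q n, mem_span_singleton_self _, fun h => ?_⟩
    have := mem_span_w_iff.mp h n
    simp [← coe_wBasis] at this

theorem w_mem_of_mem (hq0 : q ≠ 0) (hq : ∀ k : ℕ, 0 < k → q ^ k ≠ 1)
    {N : Submodule (QuantumPlane K q) (W K q)} {v : W K q} (hv : v ∈ N) {m : ℕ}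
    (hm : m ∈ ((wBasis K q).repr v).support) : w K q m ∈ N := by
  rw [← coe_wBasis]
  refine (wBasis K q).mem_of_repr_ne_zero (α := a K q)
    (pow_injective_of_pow_ne_one hq0 hq) (fun n => ?_) hv (Finsupp.mem_support_iff.mp hm)
  simpa [coe_wBasis] using a_smul_w n

theorem exists_eq_span_w (hq0 : q ≠ 0) (hq : ∀ k : ℕ, 0 < k → q ^ k ≠ 1)
    (N : Submodule (QuantumPlane K q) (W K q)) (hN : N ≠ ⊥) :
    ∃ n, N = span (QuantumPlane K q) {w K q n} := by
  classical
  have hex : ∃ m, w K q m ∈ N := by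
    obtain ⟨v, hv, hv0⟩ := N.ne_bot_iff.mp hN
    obtain ⟨m, hm⟩ :=
      Finsupp.support_nonempty_iff.mpr ((wBasis K q).repr.map_ne_zero_iff.mpr hv0)
    exact ⟨m, w_mem_of_mem hq0 hq hv hm⟩
  refine ⟨Nat.find hex, le_antisymm (fun v hv => ?_) ((span_singleton_le_iff_mem _ _).mpr
    (Nat.find_spec hex))⟩
  exact mem_span_w_iff.mpr fun k hk => Nat.find_min' hex (w_mem_of_mem hq0 hq hv hk)

end Module

end QuantumPlane

/-- In the quantum plane `B = B(q)` with `q` not a root of unity, let `J = B(a-1)`,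
`W = B/J`, `w_n = bⁿ + J` and `W_n = B·w_n`.  Then `W = W_0 ⊋ W_1 ⊋ W_2 ⊋ ⋯` is a
strictly descending chain and every nonzero `B`-submodule of `W` equals some `W_n`;
in particular the submodules of `W` are linearly ordered by inclusion. -/
theorem quantumPlane_W_submodules (K : Type) [Field K] (q : K) (hq0 : q ≠ 0)
    (hq : ∀ k : ℕ, 0 < k → q ^ k ≠ 1) :
    (Submodule.span (QuantumPlane K q)
        {Submodule.Quotient.mk (p := (Ideal.span {QuantumPlane.a K q - 1} :
          Ideal (QuantumPlane K q))) (QuantumPlane.b K q ^ 0)} = ⊤) ∧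
    StrictAnti (fun n : ℕ => Submodule.span (QuantumPlane K q)
        {Submodule.Quotient.mk (p := (Ideal.span {QuantumPlane.a K q - 1} :
          Ideal (QuantumPlane K q))) (QuantumPlane.b K q ^ n)}) ∧
    (∀ N : Submodule (QuantumPlane K q)
        (QuantumPlane K q ⧸ (Ideal.span {QuantumPlane.a K q - 1} :
          Ideal (QuantumPlane K q))),
      N ≠ ⊥ → ∃ n : ℕ, N = Submodule.span (QuantumPlane K q)
        {Submodule.Quotient.mk (p := (Ideal.span {QuantumPlane.a K q - 1} :
          Ideal (QuantumPlane K q))) (QuantumPlane.b K q ^ n)}) :=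
  ⟨QuantumPlane.span_w_zero, QuantumPlane.span_w_strictAnti,
    QuantumPlane.exists_eq_span_w hq0 hq⟩
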